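/- In H_n ⊗_ℤ R, for all integers p with 1 ≤ p ≤ n and k with 2 ≤ k ≤ n−p: A_{n−k+1}^{p+1}(b_p; k−1) · A_{n−k}^1(a_k; k) = A_{n−k+1}^{p+1}(a_k; k−1) · A_{p−1}^1(a_k; k) · A_{n−k}^{p+1}(b_p; k). -/

import Mathlib

set_option maxHeartbeats 1000000
set_option synthInstance.maxHeartbeats 400000

open MvPolynomial

/-- The simple transposition `s_{i+1}` (1-based) of `Fin n`, for `i : Fin (n-1)` (0-based). -/
def sPerm {n : ℕ} (i : Fin (n - 1)) : Equiv.Perm (Fin n) :=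
  Equiv.swap ⟨i.val, by have := i.isLt; omega⟩ ⟨i.val + 1, by have := i.isLt; omega⟩

/-- The simple transposition `s_i` of `Fin n` for a 1-based index `i : ℕ`;
junk value `1` out of range. -/
def sPermN {n : ℕ} (i : ℕ) : Equiv.Perm (Fin n) :=
  if h : 1 ≤ i ∧ i ≤ n - 1 then sPerm ⟨i - 1, by omega⟩ else 1

/-- The product of the simple transpositions corresponding to a word. -/
def wordProd {n : ℕ} (l : List (Fin (n - 1))) : Equiv.Perm (Fin n) :=
  (l.map sPerm).prod

/-- The Coxeter length of a permutation: the minimal length of a word in the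
simple transpositions expressing it. -/
noncomputable def len {n : ℕ} (w : Equiv.Perm (Fin n)) : ℕ :=
  sInf {k | ∃ l : List (Fin (n - 1)), wordProd l = w ∧ l.length = k}

/-- `l` is a reduced word for `w`. -/
def IsReducedWord {n : ℕ} (l : List (Fin (n - 1))) (w : Equiv.Perm (Fin n)) : Prop :=
  wordProd l = w ∧ l.length = len w

/-- The longest permutation `w₀` of `S_n`, sending `i ↦ n+1-i` (1-based). -/
def w0 (n : ℕ) : Equiv.Perm (Fin n) := Fin.revPerm

/-- The Bruhat order: `w ≤ v` iff some reduced word for `v` contains a subword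
that is a reduced word for `w`. -/
noncomputable def bruhatLE {n : ℕ} (w v : Equiv.Perm (Fin n)) : Prop :=
  ∃ l l' : List (Fin (n - 1)), IsReducedWord l v ∧ l'.Sublist l ∧ IsReducedWord l' w

/-- The lower of the two points moved by `s_{i+1}`. -/
def fLo {n : ℕ} (i : Fin (n - 1)) : Fin n := ⟨i.val, by have := i.isLt; omega⟩

/-- The upper of the two points moved by `s_{i+1}`. -/
def fHi {n : ℕ} (i : Fin (n - 1)) : Fin n := ⟨i.val + 1, by have := i.isLt; omega⟩

/-- The multiplicative set of monomials in a multivariate polynomial ring over `ℤ`. -/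
noncomputable def varMon (σ : Type) : Submonoid (MvPolynomial σ ℤ) :=
  Submonoid.closure (Set.range MvPolynomial.X)

/-- The ring of Laurent polynomials over `ℤ` in variables indexed by `σ`,
realized as the localization of `MvPolynomial σ ℤ` at the monomials. -/
abbrev LaurentMv (σ : Type) := Localization (varMon σ)

/-- The variable `X s` as a Laurent polynomial. -/
noncomputable def Xu {σ : Type} (s : σ) : LaurentMv σ :=
  algebraMap (MvPolynomial σ ℤ) (LaurentMv σ) (MvPolynomial.X s)

/-- The inverse `(X s)⁻¹` of a variable, as a Laurent polynomial. -/
noncomputable def XuInv {σ : Type} (s : σ) : LaurentMv σ :=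
  Localization.mk 1 ⟨MvPolynomial.X s, Submonoid.subset_closure ⟨s, rfl⟩⟩

theorem isUnit_Xu {σ : Type} (s : σ) : IsUnit (Xu s) :=
  IsLocalization.map_units (M := varMon σ) (LaurentMv σ)
    ⟨MvPolynomial.X s, Submonoid.subset_closure ⟨s, rfl⟩⟩

/-- Substitution of units for the variables, as a ring homomorphism on
Laurent polynomial rings. -/
noncomputable def substLaurent {σ τ : Type} (f : σ → LaurentMv τ)
    (hf : ∀ s, IsUnit (f s)) : LaurentMv σ →+* LaurentMv τ :=
  IsLocalization.lift (M := varMon σ) (g := (MvPolynomial.aeval f).toRingHom)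
    (by
      rintro ⟨y, hy⟩
      induction hy using Submonoid.closure_induction with
      | mem x hx =>
          obtain ⟨s, rfl⟩ := hx
          simpa using hf s
      | one => simp
      | mul x y _ _ hx hy => simpa [map_mul] using hx.mul hy)

/-- The abbreviation `R n` for the coefficient ring `ℤ[a_i^{±1}, b_i^{±1}]`:
`a`-variables indexed by `Sum.inl`, `b`-variables by `Sum.inr`. -/
abbrev Rng (n : ℕ) := LaurentMv (Fin n ⊕ Fin n)

/-- The defining relations of the degenerate Hecke algebra with `m` generators
over the Laurent polynomial ring `R n`; generator `i : Fin m` stands for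
`s_{i+1}` (1-based). -/
inductive HRelR (n m : ℕ) :
    FreeAlgebra (Rng n) (Fin m) → FreeAlgebra (Rng n) (Fin m) → Prop
  | comm (i j : Fin m) (h : (i : ℕ) + 2 ≤ j ∨ (j : ℕ) + 2 ≤ i) :
      HRelR n m (FreeAlgebra.ι _ i * FreeAlgebra.ι _ j)
        (FreeAlgebra.ι _ j * FreeAlgebra.ι _ i)
  | braid (i j : Fin m) (h : (j : ℕ) = i + 1) :
      HRelR n m (FreeAlgebra.ι _ i * FreeAlgebra.ι _ j * FreeAlgebra.ι _ i)
        (FreeAlgebra.ι _ j * FreeAlgebra.ι _ i * FreeAlgebra.ι _ j)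
  | sq (i : Fin m) :
      HRelR n m (FreeAlgebra.ι _ i * FreeAlgebra.ι _ i) (-(FreeAlgebra.ι _ i))

/-- The degenerate Hecke algebra `H_{m+1} ⊗ R n`, presented as the quotient of
the free `R n`-algebra on `m` generators by the Hecke relations.
`H_n ⊗ R` itself is `HA n (n-1)`. -/
abbrev HA (n m : ℕ) := RingQuot (HRelR n m)

noncomputable instance instHARing (n m : ℕ) : Ring (HA n m) := by
  with_unfolding_all exact RingQuot.instRing (R := FreeAlgebra (Rng n) (Fin m)) (HRelR n m)

/-- The generator `s_i` of `HA n m` for a 1-based index `i : ℕ`; junk value `0`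
out of range. -/
noncomputable def sgenA {n m : ℕ} (i : ℕ) : HA n m :=
  if h : 1 ≤ i ∧ i ≤ m then
    RingQuot.mkAlgHom (Rng n) (HRelR n m) (FreeAlgebra.ι _ (⟨i - 1, by omega⟩ : Fin m))
  else 0

/-- The Yang-Baxter element `h_i(c) = 1 + (1-c) s_i` of `HA n m` (1-based `i`). -/
noncomputable def hh {n m : ℕ} (i : ℕ) (c : Rng n) : HA n m :=
  1 + algebraMap (Rng n) (HA n m) (1 - c) * sgenA i

/-- `A_p^q(c;k) = h_{k-1+p}(d_p/c) h_{k-2+p}(d_{p-1}/c) ⋯ h_{k-1+q}(d_q/c)`,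
where `d : ℕ → Rng n` is the (1-based) list of `b`-variables used and `c` is a
unit; for `p = q - 1` this is `1`. -/
noncomputable def AA {n m : ℕ} (p q : ℕ) (c : (Rng n)ˣ) (k : ℕ)
    (d : ℕ → Rng n) : HA n m :=
  (((List.range' q (p + 1 - q)).reverse).map fun r =>
    hh (k - 1 + r) (d r * ((c⁻¹ : (Rng n)ˣ) : Rng n))).prod

/-- The `b`-variable `b_r` (1-based) of `Rng n`, as a unit; junk value `1` out
of range. -/
noncomputable def bu (n : ℕ) (r : ℕ) : (Rng n)ˣ :=
  if h : 1 ≤ r ∧ r ≤ n then (isUnit_Xu (Sum.inr (⟨r - 1, by omega⟩ : Fin n))).unit else 1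

/-- The `a`-variable `a_r` (1-based) of `Rng n`, as a unit; junk value `1` out
of range. -/
noncomputable def au (n : ℕ) (r : ℕ) : (Rng n)ˣ :=
  if h : 1 ≤ r ∧ r ≤ n then (isUnit_Xu (Sum.inl (⟨r - 1, by omega⟩ : Fin n))).unit else 1

/-- Fomin-Kirillov's element `𝔊^{(m)}(c;d) = A_{m-1}^1(c_1;1) ⋯ A_1^1(c_{m-1};m-1)`,
for 1-based variable lists `c` (units) and `d`, formed in `HA n (m-1)`. -/
noncomputable def Gfk {n : ℕ} (m : ℕ) (c : ℕ → (Rng n)ˣ) (d : ℕ → Rng n) :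
    HA n (m - 1) :=
  ((List.range' 1 (m - 1)).map fun k => AA (m - k) 1 (c k) k d).prod

/-- The list of `b`-variables of `Rng n` (1-based). -/
noncomputable def bval (n : ℕ) : ℕ → Rng n := fun r => ((bu n r : (Rng n)ˣ) : Rng n)

section Lemmas
variable {n m : ℕ}

lemma sgen_sq (i : ℕ) : (sgenA i : HA n m) * sgenA i = - sgenA i := by
  unfold sgenA
  split
  · rw [← map_mul, RingQuot.mkAlgHom_rel _ (HRelR.sq _), map_neg]
  · simp

lemma sgen_braid (i : ℕ) (h1 : 1 ≤ i) (h2 : i + 1 ≤ m) :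
    (sgenA i : HA n m) * sgenA (i + 1) * sgenA i
      = sgenA (i + 1) * sgenA i * sgenA (i + 1) := by
  rw [sgenA, dif_pos ⟨h1, by omega⟩, show sgenA (i+1) = RingQuot.mkAlgHom (Rng n) (HRelR n m)
    (FreeAlgebra.ι _ (⟨i, by omega⟩ : Fin m)) by
      rw [sgenA, dif_pos ⟨by omega, h2⟩]; norm_num]
  rw [← map_mul, ← map_mul, ← map_mul, ← map_mul,
    RingQuot.mkAlgHom_rel _ (HRelR.braid (⟨i-1, by omega⟩ : Fin m) ⟨i, by omega⟩ (by simp; omega))]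

lemma sgen_comm (i j : ℕ) (h : i + 2 ≤ j ∨ j + 2 ≤ i) :
    (sgenA i : HA n m) * sgenA j = sgenA j * sgenA i := by
  by_cases hi : 1 ≤ i ∧ i ≤ m
  · by_cases hj : 1 ≤ j ∧ j ≤ m
    · rw [sgenA, dif_pos hi, sgenA, dif_pos hj, ← map_mul, ← map_mul,
        RingQuot.mkAlgHom_rel _ (HRelR.comm (⟨i-1, by omega⟩ : Fin m) ⟨j-1, by omega⟩
          (by simp; omega))]
    · rw [show (sgenA j : HA n m) = 0 by rw [sgenA, dif_neg hj]]; simp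
  · rw [show (sgenA i : HA n m) = 0 by rw [sgenA, dif_neg hi]]; simp

end Lemmas
section Abs
variable {R A : Type*} [CommRing R] [Ring A] [Algebra R A]

lemma hmul_abs (u : A) (hu : u * u = -u) (a b : R) :
    (1 + a • u) * (1 + b • u) = 1 + (a + b - a * b) • u := by
  have expand : (1 + a • u) * (1 + b • u)
      = 1 + a • u + b • u + (a * b) • (u * u) := by
    simp only [mul_add, add_mul, one_mul, mul_one, smul_mul_assoc, mul_smul_comm, smul_smul,
      smul_add]
    module
  rw [expand, hu]
  module

lemma yb_abs (u v : A) (hu : u * u = -u) (hv : v * v = -v)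
    (hbr : u * (v * u) = v * (u * v)) (a c : R) :
    (1 + a • u) * (1 + (a + c - a * c) • v) * (1 + c • u)
      = (1 + c • v) * (1 + (a + c - a * c) • u) * (1 + a • v) := by
  have expand : ∀ (x y z : R) (w w' : A),
      (1 + x • w) * (1 + y • w') * (1 + z • w)
        = 1 + x • w + y • w' + z • w + (x * y) • (w * w') + (x * z) • (w * w)
          + (y * z) • (w' * w) + (x * y * z) • (w * (w' * w)) := by
    intro x y z w w'
    simp only [mul_add, add_mul, one_mul, mul_one, smul_mul_assoc, mul_smul_comm, smul_smul,
      mul_assoc, smul_add]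
    module
  rw [expand, expand, hu, hv, hbr]
  module
end Abs
section HH
variable {n m : ℕ}

lemma comm_abs {R A : Type*} [CommRing R] [Ring A] [Algebra R A]
    (u v : A) (huv : u * v = v * u) (a b : R) :
    (1 + a • u) * (1 + b • v) = (1 + b • v) * (1 + a • u) := by
  simp only [mul_add, add_mul, one_mul, mul_one, smul_mul_assoc, mul_smul_comm, smul_smul,
    smul_add]
  rw [huv]
  module

lemma hh_def' (i : ℕ) (c : Rng n) : (hh i c : HA n m) = 1 + (1 - c) • sgenA i := by
  rw [hh, ← Algebra.smul_def]

lemma hh_mul_same (i : ℕ) (x y : Rng n) :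
    (hh i x : HA n m) * hh i y = hh i (x * y) := by
  rw [hh_def', hh_def', hh_def',
    hmul_abs (R := Rng n) (A := HA n m) (sgenA i) (sgen_sq i) (1 - x) (1 - y)]
  congr 1
  ring

lemma hh_comm (i j : ℕ) (h : i + 2 ≤ j ∨ j + 2 ≤ i) (x y : Rng n) :
    (hh i x : HA n m) * hh j y = hh j y * hh i x := by
  rw [hh_def', hh_def']
  exact comm_abs (R := Rng n) (A := HA n m) _ _ (sgen_comm i j h) _ _

lemma hh_yb (i : ℕ) (h1 : 1 ≤ i) (h2 : i + 1 ≤ m) (x y : Rng n) :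
    (hh i x : HA n m) * hh (i + 1) (x * y) * hh i y
      = hh (i + 1) y * hh i (x * y) * hh (i + 1) x := by
  rw [hh_def', hh_def', hh_def', hh_def', hh_def', hh_def']
  have hxy : (1 - x * y : Rng n) = (1 - x) + (1 - y) - (1 - x) * (1 - y) := by ring
  rw [hxy]
  exact yb_abs (R := Rng n) (A := HA n m) _ _ (sgen_sq i) (sgen_sq (i + 1))
    (by rw [← mul_assoc, ← mul_assoc, sgen_braid i h1 h2, mul_assoc]) _ _

end HH

noncomputable def PP {n : ℕ} (m : ℕ) (j t : ℕ) (g : ℕ → Rng n) : HA n m :=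
  ((List.range t).reverse.map fun i => hh (j + i) (g i)).prod

section PPL
variable {n m : ℕ}

lemma PP_zero (j : ℕ) (g : ℕ → Rng n) : PP m j 0 g = 1 := rfl

lemma PP_top (j t : ℕ) (g : ℕ → Rng n) :
    PP m j (t + 1) g = hh (j + t) (g t) * PP m j t g := by
  rw [PP, PP, List.range_succ, List.reverse_append]
  simp

lemma PP_bot (j t : ℕ) (g : ℕ → Rng n) :
    PP m j (t + 1) g = PP m (j + 1) t (fun i => g (i + 1)) * hh j (g 0) := by
  induction t generalizing j g with
  | zero => rw [PP_top, PP_zero, PP_zero, mul_one, one_mul]; norm_num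
  | succ t ih =>
      rw [PP_top, ih, PP_top (j + 1) t, ← mul_assoc]
      have h1 : j + 1 + t = j + (t + 1) := by omega
      rw [h1]

lemma PP_split (j s l : ℕ) (g : ℕ → Rng n) :
    PP m j (s + l) g = PP m (j + s) l (fun i => g (s + i)) * PP m j s g := by
  induction l with
  | zero => rw [Nat.add_zero, PP_zero, one_mul]
  | succ l ih =>
      rw [show s + (l + 1) = (s + l) + 1 from rfl, PP_top, ih, PP_top, mul_assoc]
      have h1 : j + s + l = j + (s + l) := by omega
      rw [h1]

lemma hh_PP_comm (i j t : ℕ) (h : i + 2 ≤ j) (x : Rng n) (g : ℕ → Rng n) :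
    (hh i x : HA n m) * PP m j t g = PP m j t g * hh i x := by
  induction t with
  | zero => rw [PP_zero, one_mul, mul_one]
  | succ t ih =>
      rw [PP_top, ← mul_assoc, hh_comm i (j + t) (Or.inl (by omega)), mul_assoc, ih, mul_assoc]

lemma PP_PP_comm (j1 t1 j2 t2 : ℕ) (g1 g2 : ℕ → Rng n) (h : j1 + t1 + 1 ≤ j2) :
    (PP m j1 t1 g1 : HA n m) * PP m j2 t2 g2 = PP m j2 t2 g2 * PP m j1 t1 g1 := by
  induction t1 with
  | zero => rw [PP_zero, one_mul, mul_one]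
  | succ t ih =>
      rw [PP_top, mul_assoc, ih (by omega), ← mul_assoc,
        hh_PP_comm (j1 + t) j2 t2 (by omega), mul_assoc]

end PPL
section Core
variable {n m : ℕ}

lemma core_step {T : Type*} [Semigroup T] (A B C D u v w u' v' y : T)
    (c1 : u * B = B * u) (c2 : u' * D = D * u')
    (yb : u * v * w = y * (u' * v')) (ihe : A * (B * y) = C * D) :
    (A * u) * ((B * v) * w) = (C * u') * (D * v') := by
  have h1 : (A * u) * ((B * v) * w) = A * ((u * B) * (v * w)) := by
    simp only [mul_assoc]
  rw [h1, c1]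
  have h2 : A * ((B * u) * (v * w)) = A * (B * (u * v * w)) := by simp only [mul_assoc]
  rw [h2, yb]
  have h3 : A * (B * (y * (u' * v'))) = (A * (B * y)) * (u' * v') := by simp only [mul_assoc]
  rw [h3, ihe]
  have h4 : (C * D) * (u' * v') = C * ((D * u') * v') := by simp only [mul_assoc]
  rw [h4, ← c2]
  simp only [mul_assoc]

lemma core (t : ℕ) : ∀ (q : ℕ) (e : ℕ → Rng n) (d : Rng n), 1 ≤ q → q + t ≤ m →
    (PP m q (t + 1) e : HA n m) * (PP m (q + 1) t (fun i => e i * d) * hh q d)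
      = PP m q (t + 1) (fun i => e i * d) * PP m (q + 1) t e := by
  induction t with
  | zero =>
      intro q e d hq hm
      simp only [PP_bot, PP_zero, one_mul, mul_one, hh_mul_same]
  | succ t ih =>
      intro q e d hq hm
      rw [PP_bot q (t + 1) e, PP_bot (q + 1) t (fun i => e i * d),
        PP_bot q (t + 1) (fun i => e i * d), PP_bot (q + 1) t e]
      exact core_step _ _ _ _ _ _ _ _ _ (hh (q + 1) d)
        (hh_PP_comm q (q + 2) t (by omega) _ _)
        (hh_PP_comm q (q + 2) t (by omega) _ _)
        ((hh_yb q hq (by omega) (e 0) d).trans (mul_assoc _ _ _))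
        (ih (q + 1) (fun i => e (i + 1)) d (by omega) (by omega))

end Core
lemma AA_eq_PP {n m : ℕ} (p q k : ℕ) (c : (Rng n)ˣ) (d : ℕ → Rng n) :
    (AA p q c k d : HA n m)
      = PP m (k - 1 + q) (p + 1 - q) (fun i => d (q + i) * ((c⁻¹ : (Rng n)ˣ) : Rng n)) := by
  rw [AA, PP, List.range'_eq_map_range, ← List.map_reverse, List.map_map]
  congr 1
  refine List.map_congr_left fun i _ => ?_
  show hh (k - 1 + (q + i)) _ = hh (k - 1 + q + i) _
  rw [Nat.add_assoc]

/-- **The main exchange identity** (Buch-Rimányi):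
`A_{n-k+1}^{p+1}(b_p;k-1) A_{n-k}^1(a_k;k)
  = A_{n-k+1}^{p+1}(a_k;k-1) A_{p-1}^1(a_k;k) A_{n-k}^{p+1}(b_p;k)`. -/
theorem A_main_exchange (n p k : ℕ) (hp1 : 1 ≤ p) (hpn : p ≤ n) (hk2 : 2 ≤ k)
    (hkn : k ≤ n - p) :
    (AA (n - k + 1) (p + 1) (bu n p) (k - 1) (bval n) : HA n (n - 1)) *
        AA (n - k) 1 (au n k) k (bval n) =
      AA (n - k + 1) (p + 1) (au n k) (k - 1) (bval n) *
        AA (p - 1) 1 (au n k) k (bval n) *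
        AA (n - k) (p + 1) (bu n p) k (bval n) := by
  have hkpn : k + p ≤ n := by omega
  -- abbreviations for the three variable lists
  have hA1 : (AA (n - k + 1) (p + 1) (bu n p) (k - 1) (bval n) : HA n (n - 1))
      = PP (n - 1) (k + p - 1) (n - k - p + 1)
          (fun i => bval n (p + 1 + i) * (((bu n p)⁻¹ : (Rng n)ˣ) : Rng n)) := by
    have e1 : k - 1 - 1 + (p + 1) = k + p - 1 := by omega
    have e2 : n - k + 1 + 1 - (p + 1) = n - k - p + 1 := by omega
    rw [AA_eq_PP, e1, e2]
  have hA2 : (AA (n - k) 1 (au n k) k (bval n) : HA n (n - 1))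
      = PP (n - 1) k (n - k) (fun i => bval n (1 + i) * (((au n k)⁻¹ : (Rng n)ˣ) : Rng n)) := by
    have e1 : k - 1 + 1 = k := by omega
    have e2 : n - k + 1 - 1 = n - k := by omega
    rw [AA_eq_PP, e1, e2]
  have hA3 : (AA (n - k + 1) (p + 1) (au n k) (k - 1) (bval n) : HA n (n - 1))
      = PP (n - 1) (k + p - 1) (n - k - p + 1)
          (fun i => bval n (p + 1 + i) * (((au n k)⁻¹ : (Rng n)ˣ) : Rng n)) := by
    have e1 : k - 1 - 1 + (p + 1) = k + p - 1 := by omega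
    have e2 : n - k + 1 + 1 - (p + 1) = n - k - p + 1 := by omega
    rw [AA_eq_PP, e1, e2]
  have hA4 : (AA (p - 1) 1 (au n k) k (bval n) : HA n (n - 1))
      = PP (n - 1) k (p - 1) (fun i => bval n (1 + i) * (((au n k)⁻¹ : (Rng n)ˣ) : Rng n)) := by
    have e1 : k - 1 + 1 = k := by omega
    have e2 : p - 1 + 1 - 1 = p - 1 := by omega
    rw [AA_eq_PP, e1, e2]
  have hA5 : (AA (n - k) (p + 1) (bu n p) k (bval n) : HA n (n - 1))
      = PP (n - 1) (k + p - 1 + 1) (n - k - p)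
          (fun i => bval n (p + 1 + i) * (((bu n p)⁻¹ : (Rng n)ˣ) : Rng n)) := by
    have e1 : k - 1 + (p + 1) = k + p - 1 + 1 := by omega
    have e2 : n - k + 1 - (p + 1) = n - k - p := by omega
    rw [AA_eq_PP, e1, e2]
  -- split the second factor of the LHS
  have hsplit : PP (n - 1) k (n - k) (fun i => bval n (1 + i) * (((au n k)⁻¹ : (Rng n)ˣ) : Rng n))
      = PP (n - 1) (k + p - 1) (n - k - p + 1)
          (fun i => bval n (p + i) * (((au n k)⁻¹ : (Rng n)ˣ) : Rng n)) *
        PP (n - 1) k (p - 1) (fun i => bval n (1 + i) * (((au n k)⁻¹ : (Rng n)ˣ) : Rng n)) := by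
    have e1 : n - k = (p - 1) + (n - k - p + 1) := by omega
    have e2 : k + (p - 1) = k + p - 1 := by omega
    conv_lhs => rw [e1]
    rw [PP_split, e2]
    congr 1
    refine congrArg _ (funext fun i => ?_)
    have e3 : 1 + (p - 1 + i) = p + i := by omega
    rw [e3]
  -- rewrite the middle block as the bottom-peeled form
  have hmid : PP (n - 1) (k + p - 1) (n - k - p + 1)
        (fun i => bval n (p + i) * (((au n k)⁻¹ : (Rng n)ˣ) : Rng n))
      = PP (n - 1) (k + p - 1 + 1) (n - k - p)
          (fun i => (fun j => bval n (p + 1 + j) * (((bu n p)⁻¹ : (Rng n)ˣ) : Rng n)) i *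
            ((bu n p : Rng n) * (((au n k)⁻¹ : (Rng n)ˣ) : Rng n))) *
        hh (k + p - 1) ((bu n p : Rng n) * (((au n k)⁻¹ : (Rng n)ˣ) : Rng n)) := by
    rw [PP_bot]
    congr 1
    · refine congrArg _ (funext fun i => ?_)
      have e3 : p + (i + 1) = p + 1 + i := by omega
      rw [e3]
      simp [mul_assoc]
  have hfa : (fun i => (fun j => bval n (p + 1 + j) * (((bu n p)⁻¹ : (Rng n)ˣ) : Rng n)) i *
        ((bu n p : Rng n) * (((au n k)⁻¹ : (Rng n)ˣ) : Rng n)))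
      = fun i => bval n (p + 1 + i) * (((au n k)⁻¹ : (Rng n)ˣ) : Rng n) := by
    funext i
    show bval n (p + 1 + i) * _ * _ = _
    rw [mul_assoc]
    congr 1
    rw [← mul_assoc, Units.inv_mul, one_mul]
  have hcore := core (n := n) (m := n - 1) (n - k - p) (k + p - 1)
    (fun i => bval n (p + 1 + i) * (((bu n p)⁻¹ : (Rng n)ˣ) : Rng n))
    ((bu n p : Rng n) * (((au n k)⁻¹ : (Rng n)ˣ) : Rng n)) (by omega) (by omega)
  rw [hfa] at hcore
  rw [hA1, hA2, hA3, hA4, hA5, hsplit, hmid, hfa, ← mul_assoc, hcore,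
    mul_assoc, ← PP_PP_comm k (p - 1) (k + p - 1 + 1) (n - k - p) _ _ (by omega), ← mul_assoc]
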